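/- For every natural number n ≥ 1, β·n^n·e^{−n}·(n² + n/3 + 1/18)^{1/4} < n! ≤ √(2π)·n^n·e^{−n}·(n² + n/3 + 1/18)^{1/4}, where β = (e/√(2π))·(18/25)^{1/4}. -/

import Mathlib

/-!
Put `P(x) = x² + x/3 + 1/18` and `F(n) = n! eⁿ / (nⁿ P(n)^{1/4})`, so that
`n! = F(n) nⁿ e⁻ⁿ P(n)^{1/4}`. By Stirling's formula `F(n) → √(2π)`, so both bounds follow once `F`
is nondecreasing: the upper bound is the limit, and the lower one comes from `F(0) = 18^{1/4}`.

Raised to the fourth power, `F(n) ≤ F(n+1)` reads `4n log(1 + 1/n) + log(P(n+1)/P(n)) ≤ 4`.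
The coefficients of `P` make the defect in this inequality only of order `n⁻⁴`, so both logarithms
are bounded by their Taylor polynomials of degree 9 with remainder, which reduces the claim for
`n ≥ 9` to a polynomial inequality; the cases `n ≤ 8` are numerical, using `e > 2.7182818283`.
-/
open Real Finset Filter Topology
open scoped Nat

noncomputable def stirlingQuad (x : ℝ) : ℝ := x ^ 2 + x / 3 + 1 / 18

noncomputable def stirlingRatio (n : ℕ) : ℝ :=
  n ! * exp n / (n ^ n * stirlingQuad n ^ (1 / 4 : ℝ))

lemma stirlingQuad_pos (x : ℝ) : 0 < stirlingQuad x := by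
  unfold stirlingQuad; nlinarith [sq_nonneg (x + 1 / 6)]

lemma rpow_one_div_four_pow_four {x : ℝ} (hx : 0 ≤ x) : (x ^ (1 / 4 : ℝ)) ^ 4 = x := by
  rw [← rpow_natCast, ← rpow_mul hx]; norm_num

lemma natCast_pow_self_pos (n : ℕ) : (0 : ℝ) < (n : ℝ) ^ n := by
  exact_mod_cast Nat.pow_self_pos

lemma stirlingRatio_pos (n : ℕ) : 0 < stirlingRatio n := by
  have := stirlingQuad_pos n
  have := natCast_pow_self_pos n
  unfold stirlingRatio; positivity

lemma stirlingRatio_pow_four (n : ℕ) :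
    stirlingRatio n ^ 4 = (n ! * exp n) ^ 4 / (n ^ (4 * n) * stirlingQuad n) := by
  rw [stirlingRatio, div_pow, mul_pow (_ ^ n), rpow_one_div_four_pow_four (stirlingQuad_pos n).le,
    ← pow_mul, mul_comm n 4]

lemma stirlingRatio_zero_pow_four : stirlingRatio 0 ^ 4 = 18 := by
  rw [stirlingRatio_pow_four]; norm_num [stirlingQuad]

lemma factorial_eq_stirlingRatio_mul (n : ℕ) :
    (n ! : ℝ) = stirlingRatio n * (n ^ (n : ℝ) * exp (-n) * stirlingQuad n ^ (1 / 4 : ℝ)) := by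
  have := stirlingQuad_pos n
  have := natCast_pow_self_pos n
  rw [stirlingRatio, rpow_natCast, exp_neg]
  field_simp

noncomputable def logTaylorUpper (k : ℕ) (t : ℝ) : ℝ :=
  ∑ i ∈ range k, (-1) ^ i * t ^ (i + 1) / (i + 1) + 2 * t ^ (k + 1)

lemma log_one_add_le_logTaylorUpper (k : ℕ) {t : ℝ} (h0 : 0 ≤ t) (h1 : t ≤ 1 / 2) :
    log (1 + t) ≤ logTaylorUpper k t := by
  have ht : |-t| = t := by rw [abs_neg, abs_of_nonneg h0]
  have h := (abs_le.1 (abs_log_sub_add_sum_range_le (x := -t) (by linarith) k)).2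
  rw [ht, sub_neg_eq_add] at h
  have herr : t ^ (k + 1) / (1 - t) ≤ 2 * t ^ (k + 1) := by
    rw [div_le_iff₀ (by linarith)]; nlinarith [pow_nonneg h0 (k + 1)]
  have hsum : ∑ i ∈ range k, (-t) ^ (i + 1) / (i + 1)
      = -∑ i ∈ range k, (-1) ^ i * t ^ (i + 1) / (i + 1) := by
    rw [← sum_neg_distrib]
    refine sum_congr rfl fun i _ => ?_
    rw [neg_pow, pow_succ]; ring
  rw [logTaylorUpper]; linarith

lemma four_mul_logTaylorUpper_add_le_four {x : ℝ} (hx : 9 ≤ x) :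
    4 * x * logTaylorUpper 9 (1 / x) + logTaylorUpper 9 ((2 * x + 4 / 3) / stirlingQuad x) ≤ 4 := by
  have hP := stirlingQuad_pos x
  obtain ⟨y, hy, rfl⟩ : ∃ y, 0 ≤ y ∧ x = 9 + y := ⟨x - 9, by linarith, by ring⟩
  have hp : stirlingQuad (9 + y) = (9 + y) ^ 2 + (9 + y) / 3 + 1 / 18 := rfl
  have hx0 : 0 < 9 + y := by linarith
  generalize stirlingQuad (9 + y) = p at hP hp ⊢
  simp only [logTaylorUpper, sum_range_succ, sum_range_zero]
  norm_num [div_pow]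
  rw [← sub_nonneg]
  field_simp
  subst hp
  -- after `x = 9 + y` the numerator is a polynomial in `y` with positive coefficients
  ring_nf
  positivity

lemma log_stirlingQuad_step {x : ℝ} (hx : 9 ≤ x) :
    4 * x * log (1 + 1 / x) + log (stirlingQuad (x + 1) / stirlingQuad x) ≤ 4 := by
  have hP := stirlingQuad_pos x
  have hx0 : 0 < x := by linarith
  have hquot : stirlingQuad (x + 1) / stirlingQuad x = 1 + (2 * x + 4 / 3) / stirlingQuad x := by
    field_simp; unfold stirlingQuad; ring
  have ht : 1 / x ≤ 1 / 2 := one_div_le_one_div_of_le two_pos (by linarith)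
  have hs : (2 * x + 4 / 3) / stirlingQuad x ≤ 1 / 2 := by
    rw [div_le_iff₀ hP]; unfold stirlingQuad; nlinarith
  rw [hquot]
  calc 4 * x * log (1 + 1 / x) + log (1 + (2 * x + 4 / 3) / stirlingQuad x)
      ≤ 4 * x * logTaylorUpper 9 (1 / x) + logTaylorUpper 9 ((2 * x + 4 / 3) / stirlingQuad x) := by
        gcongr
        · exact log_one_add_le_logTaylorUpper 9 (by positivity) ht
        · exact log_one_add_le_logTaylorUpper 9 (by positivity) hs
    _ ≤ 4 := four_mul_logTaylorUpper_add_le_four hx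

lemma stirlingQuad_step (n : ℕ) :
    ((n : ℝ) + 1) ^ (4 * n) * stirlingQuad (n + 1) ≤ exp 4 * (n ^ (4 * n) * stirlingQuad n) := by
  rcases le_or_gt n 8 with hn | hn
  · have he : (2.7182818283 : ℝ) ^ 4 ≤ exp 4 := by
      rw [show (4 : ℝ) = (4 : ℕ) by norm_num, ← exp_one_pow]; gcongr; exact exp_one_gt_d9.le
    interval_cases n <;> norm_num [stirlingQuad] <;> linarith
  · have hx : (9 : ℝ) ≤ n := by exact_mod_cast hn
    have hx0 : (0 : ℝ) < n := by linarith
    have hP := stirlingQuad_pos n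
    have hexp : ((n : ℝ) + 1) ^ (4 * n) * stirlingQuad (n + 1)
        = exp (4 * n * log (1 + 1 / n) + log (stirlingQuad (n + 1) / stirlingQuad n))
          * (n ^ (4 * n) * stirlingQuad n) := by
      have hsucc : (n : ℝ) + 1 = (1 + 1 / n) * n := by field_simp
      rw [exp_add, show 4 * (n : ℝ) = (4 * n : ℕ) by push_cast; ring, exp_nat_mul,
        exp_log (by positivity), exp_log (div_pos (stirlingQuad_pos _) hP), hsucc, mul_pow, ← hsucc]
      field_simp
    rw [hexp]
    gcongr
    exact log_stirlingQuad_step hx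

lemma stirlingRatio_monotone : Monotone stirlingRatio := by
  refine monotone_nat_of_le_succ fun n => ?_
  have hden : (0 : ℝ) < n ^ (4 * n) * stirlingQuad n := by
    have := stirlingQuad_pos n
    have := natCast_pow_self_pos n
    rw [mul_comm 4, pow_mul]; positivity
  have hden_succ : (0 : ℝ) < (n + 1 : ℕ) ^ (4 * (n + 1)) * stirlingQuad (n + 1 : ℕ) := by
    have := stirlingQuad_pos (n + 1 : ℕ); positivity
  rw [← pow_le_pow_iff_left₀ (stirlingRatio_pos n).le (stirlingRatio_pos (n + 1)).le four_ne_zero,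
    stirlingRatio_pow_four, stirlingRatio_pow_four, div_le_div_iff₀ hden hden_succ]
  have hexp : exp ((n : ℝ) + 1) ^ 4 = exp n ^ 4 * exp 4 := by
    rw [← exp_nat_mul, ← exp_nat_mul, ← exp_add]; ring_nf
  push_cast
  rw [Nat.factorial_succ, Nat.cast_mul, Nat.cast_succ, mul_add_one 4 n, pow_add]
  calc (n ! * exp n) ^ 4 * (((n : ℝ) + 1) ^ (4 * n) * ((n : ℝ) + 1) ^ 4 * stirlingQuad (n + 1))
      = (((n : ℝ) + 1) * n ! * exp n) ^ 4 * (((n : ℝ) + 1) ^ (4 * n) * stirlingQuad (n + 1)) := by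
        ring
    _ ≤ (((n : ℝ) + 1) * n ! * exp n) ^ 4 * (exp 4 * (n ^ (4 * n) * stirlingQuad n)) :=
        mul_le_mul_of_nonneg_left (stirlingQuad_step n) (by positivity)
    _ = (((n : ℝ) + 1) * n ! * exp ((n : ℝ) + 1)) ^ 4 * (n ^ (4 * n) * stirlingQuad n) := by
        rw [mul_pow _ (exp ((n : ℝ) + 1)), hexp]; ring

lemma stirlingRatio_eq_stirlingSeq_mul {n : ℕ} (hn : n ≠ 0) :
    stirlingRatio n = Stirling.stirlingSeq n * (4 * n ^ 2 / stirlingQuad n) ^ (1 / 4 : ℝ) := by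
  have hn0 : (0 : ℝ) < n := by positivity
  have hP := stirlingQuad_pos n
  have hsqrt : (4 * (n : ℝ) ^ 2) ^ (1 / 4 : ℝ) = √(2 * n) := by
    rw [show 4 * (n : ℝ) ^ 2 = (2 * n) ^ (2 : ℝ) by norm_cast; ring, ← rpow_mul (by positivity),
      sqrt_eq_rpow]
    norm_num
  rw [Stirling.stirlingSeq, div_rpow (by positivity) hP.le, hsqrt, stirlingRatio, div_pow,
    ← exp_one_pow, ← exp_nat_mul]
  field_simp

lemma tendsto_four_mul_sq_div_stirlingQuad :
    Tendsto (fun n : ℕ => 4 * (n : ℝ) ^ 2 / stirlingQuad n) atTop (𝓝 4) := by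
  have h : Tendsto (fun n : ℕ => 4 / (1 + 1 / 3 * (n : ℝ)⁻¹ + 1 / 18 * ((n : ℝ)⁻¹) ^ 2)) atTop
      (𝓝 (4 / (1 + 1 / 3 * 0 + 1 / 18 * 0 ^ 2))) := by
    have h0 := tendsto_inv_atTop_zero.comp (tendsto_natCast_atTop_atTop (R := ℝ))
    exact tendsto_const_nhds.div (((h0.const_mul _).const_add _).add ((h0.pow 2).const_mul _))
      (by norm_num)
  norm_num at h
  refine h.congr' ((eventually_ne_atTop 0).mono fun n hn => ?_)
  unfold stirlingQuad
  field_simp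

lemma tendsto_stirlingRatio : Tendsto stirlingRatio atTop (𝓝 √(2 * π)) := by
  have h4 : (4 : ℝ) ^ (1 / 4 : ℝ) = √2 := by
    rw [show (4 : ℝ) = 2 ^ (2 : ℝ) by norm_num, ← rpow_mul (by norm_num), sqrt_eq_rpow]
    norm_num
  have h := Stirling.tendsto_stirlingSeq_sqrt_pi.mul
    (tendsto_four_mul_sq_div_stirlingQuad.rpow_const (p := 1 / 4) (Or.inl four_ne_zero))
  rw [h4, ← sqrt_mul pi_pos.le, mul_comm π] at h
  exact h.congr' ((eventually_ne_atTop 0).mono fun n hn =>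
    (stirlingRatio_eq_stirlingSeq_mul hn).symm)

lemma exp_one_div_sqrt_two_pi_mul_lt_stirlingRatio_zero :
    exp 1 / √(2 * π) * (18 / 25 : ℝ) ^ (1 / 4 : ℝ) < stirlingRatio 0 := by
  have hsqrt : √(2 * π) ^ 4 = (2 * π) ^ 2 := by
    rw [show 4 = 2 * 2 by rfl, pow_mul, sq_sqrt (by positivity)]
  have he : exp 1 ^ 4 < 3 ^ 4 := by gcongr; exact exp_one_lt_d9.trans (by norm_num)
  rw [← pow_lt_pow_iff_left₀ (by positivity) (stirlingRatio_pos 0).le four_ne_zero,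
    stirlingRatio_zero_pow_four, mul_pow, div_pow, rpow_one_div_four_pow_four (by norm_num), hsqrt,
    div_mul_eq_mul_div, div_lt_iff₀ (by positivity)]
  nlinarith [pi_gt_three]

theorem stmt_17 (n : ℕ) :
    (Real.exp 1 / Real.sqrt (2 * Real.pi)) * ((18:ℝ)/25) ^ ((1:ℝ)/4) *
        (n:ℝ) ^ (n:ℝ) * Real.exp (-(n:ℝ)) *
        ((n:ℝ)^2 + (n:ℝ)/3 + 1/18) ^ ((1:ℝ)/4) < (n.factorial : ℝ) ∧
    (n.factorial : ℝ) ≤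
      Real.sqrt (2 * Real.pi) * (n:ℝ) ^ (n:ℝ) * Real.exp (-(n:ℝ)) *
        ((n:ℝ)^2 + (n:ℝ)/3 + 1/18) ^ ((1:ℝ)/4) := by
  have hX : 0 < (n : ℝ) ^ (n : ℝ) * exp (-n) * stirlingQuad n ^ (1 / 4 : ℝ) := by
    have := natCast_pow_self_pos n
    have := stirlingQuad_pos n
    rw [rpow_natCast]; positivity
  change _ * stirlingQuad n ^ _ < _ ∧ _ ≤ _ * stirlingQuad n ^ _
  rw [factorial_eq_stirlingRatio_mul n]
  constructor
  · calc _ = exp 1 / √(2 * π) * (18 / 25 : ℝ) ^ (1 / 4 : ℝ)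
          * ((n : ℝ) ^ (n : ℝ) * exp (-n) * stirlingQuad n ^ (1 / 4 : ℝ)) := by ring
      _ < stirlingRatio 0 * ((n : ℝ) ^ (n : ℝ) * exp (-n) * stirlingQuad n ^ (1 / 4 : ℝ)) :=
        mul_lt_mul_of_pos_right exp_one_div_sqrt_two_pi_mul_lt_stirlingRatio_zero hX
      _ ≤ _ := mul_le_mul_of_nonneg_right (stirlingRatio_monotone n.zero_le) hX.le
  · calc _ ≤ √(2 * π) * ((n : ℝ) ^ (n : ℝ) * exp (-n) * stirlingQuad n ^ (1 / 4 : ℝ)) :=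
        mul_le_mul_of_nonneg_right
          (stirlingRatio_monotone.ge_of_tendsto tendsto_stirlingRatio n) hX.le
      _ = _ := by ring
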